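/- arXiv:2309.09819 — 2 statements merged into one kernel-verified Lean document; each statement's English description precedes it below -/
import Mathlib

section
/- (Quadratic lower bound, Theorem 4.4.) Under the hypotheses of Lemmas 1 and 2, for all α > 0: Θ(α) ≥ Φ(α), where Φ(α) := 2α(u − ũ)ᵀd(u,ũ,ξ) − α²‖H⁻¹d(u,ũ,ξ)‖²_H. -/
/-! With `w = u - u_α`, the hypothesis reads `Θ(α) ≥ ‖w‖²_H - 2α wᵀd + 2α(u - ũ)ᵀd`, and completing
the square, `0 ≤ ‖w - αH⁻¹d‖²_H = ‖w‖²_H - 2α wᵀd + α²‖H⁻¹d‖²_H`, bounds the first two terms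
below by `-α²‖H⁻¹d‖²_H`. -/

open Matrix

namespace Matrix

variable {n : Type*} [Fintype n] [DecidableEq n] {H : Matrix n n ℝ}

theorem IsHermitian.dotProduct_mulVec_sub_smul_inv_mulVec (hH : H.IsHermitian)
    (hdet : IsUnit H.det) (w d : n → ℝ) (a : ℝ) :
    (w - a • H⁻¹ *ᵥ d) ⬝ᵥ H *ᵥ (w - a • H⁻¹ *ᵥ d)
      = w ⬝ᵥ H *ᵥ w - 2 * a * (w ⬝ᵥ d) + a ^ 2 * (d ⬝ᵥ H⁻¹ *ᵥ d) := by
  have hHd : H *ᵥ H⁻¹ *ᵥ d = d := by rw [mulVec_mulVec, mul_nonsing_inv H hdet, one_mulVec]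
  have hsymm : H⁻¹ *ᵥ d ⬝ᵥ H *ᵥ w = w ⬝ᵥ d := by
    rw [dotProduct_mulVec, ← mulVec_transpose, ← conjTranspose_eq_transpose_of_trivial, hH.eq,
      hHd, dotProduct_comm]
  simp only [sub_dotProduct, dotProduct_sub, mulVec_sub, mulVec_smul, smul_dotProduct,
    dotProduct_smul, hHd, hsymm, smul_eq_mul, dotProduct_comm (H⁻¹ *ᵥ d) d]
  ring

theorem PosDef.two_mul_dotProduct_sub_le (hH : H.PosDef) (w d : n → ℝ) (a : ℝ) :
    2 * a * (w ⬝ᵥ d) - a ^ 2 * (d ⬝ᵥ H⁻¹ *ᵥ d) ≤ w ⬝ᵥ H *ᵥ w := by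
  have hsq := hH.posSemidef.dotProduct_mulVec_nonneg (w - a • H⁻¹ *ᵥ d)
  simp only [star_trivial] at hsq
  rw [hH.isHermitian.dotProduct_mulVec_sub_smul_inv_mulVec
    ((isUnit_iff_isUnit_det H).mp hH.isUnit)] at hsq
  linarith

end Matrix

/-- Quadratic lower bound (Theorem 4.4): if the corrector family `u_α` satisfies the
progress bound `Θ(α) ≥ ‖u_α - u‖²_H + 2α(u_α - ũ)ᵀd` (with
`Θ(α) = ‖u - u*‖²_H - ‖u_α - u*‖²_H` and `d = d(u,ũ,ξ)`), then for all `α > 0`,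
`Θ(α) ≥ Φ(α) := 2α(u - ũ)ᵀd - α²‖H⁻¹d‖²_H`. -/
theorem ppcm_quadratic_lower_bound
    (N : ℕ) (H : Matrix (Fin N) (Fin N) ℝ) (hH : H.PosDef)
    (u ut ustar : Fin N → ℝ) (d : Fin N → ℝ)
    (uα : ℝ → (Fin N → ℝ))
    (hbase : ∀ α : ℝ, 0 < α →
      ((u - ustar) ⬝ᵥ H.mulVec (u - ustar)) - ((uα α - ustar) ⬝ᵥ H.mulVec (uα α - ustar))
        ≥ (uα α - u) ⬝ᵥ H.mulVec (uα α - u) + 2 * α * ((uα α - ut) ⬝ᵥ d)) :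
    ∀ α : ℝ, 0 < α →
      ((u - ustar) ⬝ᵥ H.mulVec (u - ustar)) - ((uα α - ustar) ⬝ᵥ H.mulVec (uα α - ustar))
        ≥ 2 * α * ((u - ut) ⬝ᵥ d) - α ^ 2 * (d ⬝ᵥ H⁻¹.mulVec d) := by
  intro α hα
  have hflip : (uα α - u) ⬝ᵥ H *ᵥ (uα α - u) = (u - uα α) ⬝ᵥ H *ᵥ (u - uα α) := by
    rw [← neg_sub, mulVec_neg, neg_dotProduct, dotProduct_neg, neg_neg]
  have hsplit : (uα α - ut) ⬝ᵥ d = (u - ut) ⬝ᵥ d - (u - uα α) ⬝ᵥ d := by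
    rw [← sub_dotProduct, sub_sub_sub_cancel_left]
  have hsq := hH.two_mul_dotProduct_sub_le (u - uα α) d α
  have hb := hbase α hα
  rw [hflip, hsplit, mul_sub] at hb
  linarith
end

section
/- For H symmetric positive definite, vectors u, ũ, ξ with ‖H⁻¹ξ‖_H ≤ η‖u−ũ‖_H (0 < η < 1), and d = H(u−ũ) − ξ, it holds that 2(u−ũ)ᵀd − ‖H⁻¹d‖²_H ≥ (1−η²)‖u−ũ‖²_H. -/
/-!
Expanding `d = H(u - ũ) - ξ` gives the exact identity
`2(u - ũ)ᵀd - ‖H⁻¹d‖²_H = ‖u - ũ‖²_H - ‖H⁻¹ξ‖²_H`,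
and squaring the criterion bounds the subtracted term by `η²‖u - ũ‖²_H`.
-/

open Matrix

namespace Matrix

variable {n R : Type*} [Fintype n] [DecidableEq n] [CommRing R]

theorem IsSymm.mulVec_dotProduct_nonsing_inv_mulVec {H : Matrix n n R} (hH : H.IsSymm)
    (hdet : IsUnit H.det) (w ξ : n → R) : H *ᵥ w ⬝ᵥ H⁻¹ *ᵥ ξ = w ⬝ᵥ ξ := by
  rw [dotProduct_mulVec, ← vecMul_transpose, hH.eq, vecMul_vecMul, mul_nonsing_inv H hdet,
    vecMul_one]

theorem IsSymm.two_dotProduct_sub_nonsing_inv_form_eq {H : Matrix n n R} (hH : H.IsSymm)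
    (hdet : IsUnit H.det) (w ξ : n → R) :
    2 * (w ⬝ᵥ (H *ᵥ w - ξ)) - (H *ᵥ w - ξ) ⬝ᵥ H⁻¹ *ᵥ (H *ᵥ w - ξ)
      = w ⬝ᵥ H *ᵥ w - ξ ⬝ᵥ H⁻¹ *ᵥ ξ := by
  have hinv : H⁻¹ *ᵥ (H *ᵥ w) = w := by
    rw [mulVec_mulVec, nonsing_inv_mul H hdet, one_mulVec]
  rw [mulVec_sub, hinv, sub_dotProduct, dotProduct_sub, dotProduct_sub, dotProduct_sub,
    hH.mulVec_dotProduct_nonsing_inv_mulVec hdet, dotProduct_comm (H *ᵥ w) w,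
    dotProduct_comm ξ w]
  ring

end Matrix

theorem Real.le_sq_mul_of_sqrt_le_mul_sqrt {a b η : ℝ} (hb : 0 ≤ b) (h : √a ≤ η * √b) :
    a ≤ η ^ 2 * b := by
  simpa only [mul_pow, Real.sq_sqrt hb] using (Real.sqrt_le_iff.mp h).2

theorem ppcm_key_inequality_general
    (N : ℕ) (H : Matrix (Fin N) (Fin N) ℝ) (hH : H.PosDef)
    (η : ℝ)
    (u ut ξ : Fin N → ℝ)
    (d : Fin N → ℝ) (hd : d = H.mulVec (u - ut) - ξ)
    (hcrit : Real.sqrt (ξ ⬝ᵥ H⁻¹.mulVec ξ) ≤ η * Real.sqrt ((u - ut) ⬝ᵥ H.mulVec (u - ut))) :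
    2 * ((u - ut) ⬝ᵥ d) - d ⬝ᵥ H⁻¹.mulVec d
      ≥ (1 - η ^ 2) * ((u - ut) ⬝ᵥ H.mulVec (u - ut)) := by
  have hdet : IsUnit H.det := isUnit_iff_isUnit_det H |>.mp hH.isUnit
  have hcrit_sq : ξ ⬝ᵥ H⁻¹ *ᵥ ξ ≤ η ^ 2 * ((u - ut) ⬝ᵥ H *ᵥ (u - ut)) :=
    Real.le_sq_mul_of_sqrt_le_mul_sqrt (hH.posSemidef.dotProduct_mulVec_nonneg (u - ut)) hcrit
  rw [hd, (isHermitian_iff_isSymm.mp hH.isHermitian).two_dotProduct_sub_nonsing_inv_form_eq hdet]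
  linear_combination hcrit_sq

/-- For `H` symmetric positive definite, `d = H(u - ũ) - ξ` and the criterion
`‖H⁻¹ξ‖_H ≤ η‖u - ũ‖_H` with `η ∈ (0,1)`, one has
`2(u - ũ)ᵀd - ‖H⁻¹d‖²_H ≥ (1 - η²)‖u - ũ‖²_H`. -/
theorem ppcm_key_inequality
    (N : ℕ) (H : Matrix (Fin N) (Fin N) ℝ) (hH : H.PosDef)
    (η : ℝ) (hη0 : 0 < η) (hη1 : η < 1)
    (u ut ξ : Fin N → ℝ)
    (d : Fin N → ℝ) (hd : d = H.mulVec (u - ut) - ξ)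
    (hcrit : Real.sqrt (ξ ⬝ᵥ H⁻¹.mulVec ξ) ≤ η * Real.sqrt ((u - ut) ⬝ᵥ H.mulVec (u - ut))) :
    2 * ((u - ut) ⬝ᵥ d) - d ⬝ᵥ H⁻¹.mulVec d
      ≥ (1 - η ^ 2) * ((u - ut) ⬝ᵥ H.mulVec (u - ut)) :=
  ppcm_key_inequality_general N H hH η u ut ξ d hd hcrit
end
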